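/- arXiv:0704.3840 — 3 statements merged into one kernel-verified Lean document; each statement's English description precedes it below -/
import Mathlib

section
/- Let K be a field of characteristic zero, E and F K-vector spaces, and u, v : E^m → F two m-multilinear maps. If u(x,...,x) = v(x,...,x) for all x ∈ E, then for all r, all z = (z_1,...,z_r) ∈ E^r and all p = (p_1,...,p_r) ∈ N^r with p_1 + ... + p_r = m, the symmetrizations ũ(z;p) and ṽ(z;p) agree, where ũ(z;p) denotes the sum of all terms u(x_1,...,x_m) in which exactly p_j of the arguments x_i equal z_j for each j. -/
open Finset
open scoped Nat

/-- `f : E → F` is a homogeneous polynomial of degree `m` with variables in `E`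
and coefficients in `F`: it is determined by some `m`-multilinear map. -/
def IsHomog (K : Type*) [Field K] {E F : Type*} [AddCommGroup E] [Module K E]
    [AddCommGroup F] [Module K F] (m : ℕ) (f : E → F) : Prop :=
  ∃ u : MultilinearMap K (fun _ : Fin m => E) F, ∀ x, f x = u fun _ => x

/-- A formal series with variables in `X` and coefficients in `F`, presented by a
family of multilinear maps determining its homogeneous components. -/
abbrev MSeries (K : Type*) [Field K] (X F : Type*) [AddCommGroup X] [Module K X]
    [AddCommGroup F] [Module K F] :=
  ∀ m : ℕ, MultilinearMap K (fun _ : Fin m => X) F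

/-- The homogeneous components (as functions) of a presented formal series. -/
def evalS {K : Type*} [Field K] {X F : Type*} [AddCommGroup X] [Module K X]
    [AddCommGroup F] [Module K F] (f : MSeries K X F) : ℕ → X → F :=
  fun m x => f m fun _ => x

/-- Degree-`s` component of the derivative `ξ f` of the formal series `f` along the
formal series `ξ` : `g_s = Σ_{r+m-1=s} ξ_r f_m`, where `(ξ_r f_m)(x)` is the sum over
insertions of `ξ_r(x)` into one slot of a multilinear map determining `f_m`. -/
def dcomp {K : Type*} [Field K] {X F : Type*} [AddCommGroup X] [Module K X]
    [AddCommGroup F] [Module K F]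
    (ξ : MSeries K X X) (f : MSeries K X F) (s : ℕ) (x : X) : F :=
  ∑ r ∈ Finset.range (s + 2), ∑ i : Fin (s + 1 - r),
    f (s + 1 - r) (Function.update (fun _ => x) i (ξ r fun _ => x))

/-- The bracket `[ξ,η] = ξη - ηξ` on `S(X)`, at the level of components. -/
def br {K : Type*} [Field K] {X : Type*} [AddCommGroup X] [Module K X]
    (ξ η : MSeries K X X) (s : ℕ) (x : X) : X :=
  dcomp ξ η s x - dcomp η ξ s x

/-- The pointwise bracket on `A[[Y]]` (component functions) induced by the bracket of
the Lie algebra `A` : `[f,g]_s (y) = Σ_{n+r=s} [f_n(y), g_r(y)]`. -/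
def PBr {Y A : Type*} [LieRing A] (f g : ℕ → Y → A) (s : ℕ) (y : Y) : A :=
  ∑ n ∈ Finset.range (s + 1), ⁅f n y, g (s - n) y⁆

/-- Components of the fundamental action of a Lie algebra `B` on itself:
`d_b` has degree-`n` component `y ↦ t_n (ad y)^n (b)`. -/
def fd {K : Type*} [Field K] {B : Type*} [LieRing B] [LieAlgebra K B]
    (t : ℕ → K) (b : B) : ℕ → B → B :=
  fun n y => t n • ((LieAlgebra.ad K B y ^ n) b)

/-- The generating-series condition `Σ t_n T^n = T e^T / (e^T - 1)`, i.e.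
`(Σ t_n T^n) (e^T - 1) = T e^T`. -/
def GenFun (K : Type*) [Field K] [CharZero K] (t : ℕ → K) : Prop :=
  PowerSeries.mk t * (PowerSeries.exp K - 1) = PowerSeries.X * PowerSeries.exp K

/-- The symmetrization `ũ(z;p)` : the sum of all `u(x_1,…,x_m)` in which exactly `p j` of
the arguments equal `z j`, for each `j`. -/
noncomputable def symU {K : Type*} [Field K] {E F : Type*} [AddCommGroup E] [Module K E]
    [AddCommGroup F] [Module K F] {m r : ℕ}
    (u : MultilinearMap K (fun _ : Fin m => E) F) (z : Fin r → E) (p : Fin r → ℕ) : F :=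
  ∑ c ∈ Finset.univ.filter (fun c : Fin m → Fin r =>
      ∀ j, (Finset.univ.filter fun i => c i = j).card = p j),
    u fun i => z (c i)



private lemma fd_pow_eval (K : Type*) [Field K] [CharZero K] :
    ∀ k n : ℕ, n ≤ k →
      (fwdDiff (1:ℕ))^[k] (fun x : ℕ => ((x : K)) ^ n) = fun _ => if n = k then (k ! : K) else 0 := by
  intro k
  induction k with
  | zero =>
    intro n hn
    interval_cases n
    simp
  | succ k IH =>
    intro n hn
    rw [Function.iterate_succ_apply]
    have hΔ : fwdDiff (1:ℕ) (fun x : ℕ => ((x : K)) ^ n)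
        = ∑ i ∈ Finset.range n, (n.choose i : K) • fun x : ℕ => ((x : K)) ^ i := by
      ext x
      have hx : ((x : K) + 1) ^ n = ∑ i ∈ Finset.range (n + 1), (x : K) ^ i * (n.choose i) := by
        simpa using add_pow (x : K) 1 n
      simp only [fwdDiff, Finset.sum_apply, Pi.smul_apply, smul_eq_mul]
      push_cast
      rw [hx, Finset.sum_range_succ]
      simp [mul_comm]
    rw [hΔ, fwdDiff_iter_finset_sum]
    ext x
    rw [Finset.sum_apply]
    simp only [fwdDiff_iter_const_smul]
    have hterm : ∀ i ∈ Finset.range n,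
        ((n.choose i : K) • (fwdDiff (1:ℕ))^[k] (fun x : ℕ => ((x : K)) ^ i)) x
          = if i = k then (n.choose i : K) * (k ! : K) else 0 := by
      intro i hi
      have hik : i ≤ k := by
        have := Finset.mem_range.mp hi
        omega
      rw [Pi.smul_apply, congrFun (IH i hik) x, smul_eq_mul]
      split <;> simp
    rw [Finset.sum_congr rfl hterm, Finset.sum_ite_eq' (Finset.range n) k
      (fun i => (n.choose i : K) * (k ! : K))]
    rcases Nat.lt_or_ge n (k + 1) with hlt | hge
    · have h1 : k ∉ Finset.range n := by simp; omega
      have h2 : n ≠ k + 1 := by omega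
      simp [h1, h2]
    · have hn' : n = k + 1 := by omega
      subst hn'
      have h1 : k ∈ Finset.range (k + 1) := by simp
      rw [if_pos h1, if_pos rfl, Nat.choose_succ_self_right, Nat.factorial_succ]
      push_cast
      ring

private lemma S_eval (K : Type*) [Field K] [CharZero K] (k n : ℕ) (hn : n ≤ k) :
    ∑ q ∈ Finset.range (k + 1), ((-1 : K) ^ (k - q) * (k.choose q)) * ((q : K)) ^ n
      = if n = k then (k ! : K) else 0 := by
  have h := fwdDiff_iter_eq_sum_shift (1 : ℕ) (fun x : ℕ => ((x : K)) ^ n) k 0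
  rw [congrFun (fd_pow_eval K k n hn) 0] at h
  rw [h]
  refine Finset.sum_congr rfl fun q hq => ?_
  simp only [zero_add, smul_eq_mul, mul_one, zsmul_eq_mul]
  push_cast
  ring

private lemma symU_zero {K : Type*} [Field K] [CharZero K] {E F : Type*} [AddCommGroup E]
    [Module K E] [AddCommGroup F] [Module K F] {m r : ℕ}
    (w : MultilinearMap K (fun _ : Fin m => E) F) (hw : ∀ x : E, w (fun _ => x) = 0)
    (z : Fin r → E) (p : Fin r → ℕ) (hp : ∑ j, p j = m) : symU w z p = 0 := by
  classical
  set d : (Fin m → Fin r) → Fin r → ℕ :=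
    fun c j => (Finset.univ.filter fun i => c i = j).card with hd
  have hdm : ∀ c : Fin m → Fin r, ∑ j, d c j = m := by
    intro c
    have := Finset.card_eq_sum_card_fiberwise (f := c) (s := Finset.univ) (t := Finset.univ)
      (fun x _ => Finset.mem_univ (c x))
    simpa [hd] using this.symm
  have hprod : ∀ (q : Fin r → ℕ) (c : Fin m → Fin r),
      (∏ i, ((q (c i) : K))) = ∏ j, ((q j : K)) ^ d c j := by
    intro q c
    rw [← Finset.prod_fiberwise_of_maps_to (fun i _ => Finset.mem_univ (c i))
      (fun i => ((q (c i) : K)))]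
    refine Finset.prod_congr rfl fun j _ => ?_
    have hin : ∀ i ∈ Finset.univ.filter (fun i => c i = j), ((q (c i) : K)) = ((q j : K)) := by
      intro i hi
      rw [(Finset.mem_filter.mp hi).2]
    rw [Finset.prod_congr rfl hin, Finset.prod_const]
  have hexp : ∀ q : Fin r → ℕ,
      (0 : F) = ∑ c : Fin m → Fin r, (∏ j, ((q j : K)) ^ d c j) • w (fun i => z (c i)) := by
    intro q
    calc (0 : F) = w (fun _ : Fin m => ∑ j, (q j : K) • z j) := (hw _).symm
      _ = ∑ c : Fin m → Fin r, w (fun i => (q (c i) : K) • z (c i)) :=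
          w.map_sum (fun _ j => (q j : K) • z j)
      _ = _ := by
          refine Finset.sum_congr rfl fun c _ => ?_
          rw [w.map_smul_univ (fun i => (q (c i) : K)) (fun i => z (c i)), hprod q c]
  set a : (Fin r → ℕ) → K :=
    fun q => ∏ j, ((-1 : K) ^ (p j - q j) * ((p j).choose (q j))) with ha
  set Q : Finset (Fin r → ℕ) := Fintype.piFinset (fun j : Fin r => Finset.range (p j + 1))
    with hQ
  have key : (0 : F) = ((∏ j, (p j)! : ℕ) : K) • symU w z p := by
    have c3 : ∀ c : Fin m → Fin r,
        (∑ q ∈ Q, a q * ∏ j, ((q j : K)) ^ d c j)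
          = if (∀ j, d c j = p j) then ((∏ j, (p j)! : ℕ) : K) else 0 := by
      intro c
      have hfac : (∑ q ∈ Q, a q * ∏ j, ((q j : K)) ^ d c j)
          = ∏ j, ∑ qj ∈ Finset.range (p j + 1),
              ((-1 : K) ^ (p j - qj) * ((p j).choose qj)) * ((qj : K)) ^ d c j := by
        rw [Finset.prod_univ_sum, hQ]
        refine Finset.sum_congr rfl fun q _ => ?_
        rw [ha, ← Finset.prod_mul_distrib]
      rw [hfac]
      by_cases hc : ∀ j, d c j = p j
      · rw [if_pos hc, Nat.cast_prod]
        refine Finset.prod_congr rfl fun j _ => ?_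
        rw [hc j, S_eval K (p j) (p j) le_rfl, if_pos rfl]
      · rw [if_neg hc]
        have hlt : ∃ j, d c j < p j := by
          by_contra hno
          push_neg at hno
          apply hc
          intro j
          have hsum : ∑ j, p j = ∑ j, d c j := by rw [hp, hdm c]
          exact ((Finset.sum_eq_sum_iff_of_le (fun i _ => hno i)).mp hsum j
            (Finset.mem_univ j)).symm
        obtain ⟨j0, hj0⟩ := hlt
        refine Finset.prod_eq_zero (Finset.mem_univ j0) ?_
        rw [S_eval K (p j0) (d c j0) hj0.le, if_neg (Nat.ne_of_lt hj0)]
    calc (0 : F) = ∑ q ∈ Q, a q • (0 : F) := by simp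
      _ = ∑ q ∈ Q, ∑ c : Fin m → Fin r,
            (a q * ∏ j, ((q j : K)) ^ d c j) • w (fun i => z (c i)) := by
          refine Finset.sum_congr rfl fun q _ => ?_
          rw [hexp q, Finset.smul_sum]
          exact Finset.sum_congr rfl fun c _ => smul_smul _ _ _
      _ = ∑ c : Fin m → Fin r,
            (∑ q ∈ Q, a q * ∏ j, ((q j : K)) ^ d c j) • w (fun i => z (c i)) := by
          rw [Finset.sum_comm]
          exact Finset.sum_congr rfl fun c _ => (Finset.sum_smul).symm
      _ = ∑ c : Fin m → Fin r,
            (if (∀ j, d c j = p j) then ((∏ j, (p j)! : ℕ) : K) else 0)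
              • w (fun i => z (c i)) := by
          exact Finset.sum_congr rfl fun c _ => by rw [c3 c]
      _ = ((∏ j, (p j)! : ℕ) : K) • symU w z p := by
          have hsym : symU w z p = ∑ c ∈ Finset.univ.filter
              (fun c : Fin m → Fin r => ∀ j, d c j = p j), w (fun i => z (c i)) := rfl
          rw [hsym, Finset.smul_sum, Finset.sum_filter]
          refine Finset.sum_congr rfl fun c _ => ?_
          split <;> simp
  have hne : ((∏ j, (p j)! : ℕ) : K) ≠ 0 := by
    rw [Nat.cast_ne_zero]
    exact Finset.prod_ne_zero_iff.mpr fun j _ => Nat.factorial_ne_zero _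
  rcases smul_eq_zero.mp key.symm with h | h
  · exact absurd h hne
  · exact h

/-- if two `m`-multilinear maps agree on the diagonal, their
symmetrizations agree. -/
theorem stmt1 (K : Type*) [Field K] [CharZero K] {E F : Type*} [AddCommGroup E] [Module K E]
    [AddCommGroup F] [Module K F] {m : ℕ}
    (u v : MultilinearMap K (fun _ : Fin m => E) F)
    (h : ∀ x : E, u (fun _ => x) = v fun _ => x)
    (r : ℕ) (z : Fin r → E) (p : Fin r → ℕ) (hp : ∑ j, p j = m) :
    symU u z p = symU v z p := by
  classical
  have h0 : ∀ x : E, (u - v) (fun _ => x) = 0 := by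
    intro x
    rw [MultilinearMap.sub_apply, h x, sub_self]
  have hz := symU_zero (u - v) h0 z p hp
  have hsub : symU (u - v) z p = symU u z p - symU v z p := by
    unfold symU
    rw [← Finset.sum_sub_distrib]
    exact Finset.sum_congr rfl fun c _ => MultilinearMap.sub_apply ..
  rw [hsub] at hz
  exact sub_eq_zero.mp hz
end

section
/- Let K have characteristic zero, X and F be K-vector spaces, ξ : X → X a homogeneous polynomial of degree r determined by an r-multilinear map, and f : X → F a homogeneous polynomial of degree m determined by an m-multilinear map u. Then the map ξf : X → F defined by (ξf)(x) = sum of all u(x_1,...,x_m) where exactly one argument equals ξ(x) and the rest equal x, is a homogeneous polynomial of degree r + m − 1 (with the convention that it is 0 if r + m − 1 < 0), and it does not depend on the choice of the multilinear map u determining f. -/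
open Finset
open scoped Nat

/-- `(ξ f)(x)` for `f` determined by the `m`-multilinear `u` : the sum of all
`u(x_1,…,x_m)` with exactly one argument equal to `ξ(x)` and the rest equal to `x`. -/
def insF {K : Type*} [Field K] {X F : Type*} [AddCommGroup X] [Module K X]
    [AddCommGroup F] [Module K F] {m : ℕ}
    (u : MultilinearMap K (fun _ : Fin m => X) F) (ξ : X → X) (x : X) : F :=
  ∑ i : Fin m, u (Function.update (fun _ => x) i (ξ x))


section DerivAux
set_option linter.unusedSectionVars false
variable {K : Type*} [Field K] [CharZero K] {X F : Type*} [AddCommGroup X] [Module K X]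
    [AddCommGroup F] [Module K F]

theorem diag_poly' {m : ℕ} (ph : Module.Dual K F)
    (w : MultilinearMap K (fun _ : Fin m => X) F) (x y : X) (t : K) :
    ph (w (fun _ => x + t • y)) =
      Polynomial.eval t (∑ s : Finset (Fin m),
        Polynomial.C (ph (w (s.piecewise (fun _ => y) (fun _ => x)))) * Polynomial.X ^ s.card) := by
  have h1 : (fun _ : Fin m => x + t • y) = (fun _ : Fin m => t • y) + (fun _ => x) := by
    funext i; simp [add_comm]
  rw [h1, w.map_add_univ]
  rw [map_sum, Polynomial.eval_finset_sum]
  refine Finset.sum_congr rfl fun s _ => ?_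
  have h2 : s.piecewise (fun _ : Fin m => t • y) (fun _ => x)
      = s.piecewise (fun i => (fun _ : Fin m => t) i •
            (s.piecewise (fun _ : Fin m => y) (fun _ => x)) i)
          (s.piecewise (fun _ : Fin m => y) (fun _ => x)) := by
    ext j
    by_cases h : j ∈ s <;> simp [Finset.piecewise, h]
  rw [h2, w.map_piecewise_smul]
  simp only [map_smul, Polynomial.eval_mul, Polynomial.eval_C, Polynomial.eval_pow,
    Polynomial.eval_X, smul_eq_mul, Finset.prod_const]
  ring

theorem insF_indep' {m : ℕ} (u v : MultilinearMap K (fun _ : Fin m => X) F)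
    (h : ∀ z, u (fun _ => z) = v (fun _ => z)) (x y : X) :
    ∑ i : Fin m, u (Function.update (fun _ => x) i y) =
      ∑ i : Fin m, v (Function.update (fun _ => x) i y) := by
  rw [← sub_eq_zero, ← Module.forall_dual_apply_eq_zero_iff K]
  intro ph
  rw [map_sub, sub_eq_zero]
  set P : MultilinearMap K (fun _ : Fin m => X) F → Polynomial K := fun w =>
    ∑ s : Finset (Fin m),
      Polynomial.C (ph (w (s.piecewise (fun _ => y) (fun _ => x)))) * Polynomial.X ^ s.card with hP
  have hPuv : P u = P v := by
    apply Polynomial.funext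
    intro t
    rw [← diag_poly' ph u x y t, ← diag_poly' ph v x y t, h]
  have key : ∀ w : MultilinearMap K (fun _ : Fin m => X) F,
      (P w).coeff 1 = ph (∑ i : Fin m, w (Function.update (fun _ => x) i y)) := by
    intro w
    rw [hP]
    simp only [Polynomial.finset_sum_coeff, Polynomial.coeff_C_mul, Polynomial.coeff_X_pow,
      mul_ite, mul_one, mul_zero]
    rw [map_sum]
    rw [← Finset.sum_filter]
    refine (Finset.sum_bij (i := fun (i : Fin m) _ => ({i} : Finset (Fin m))) ?_ ?_ ?_ ?_).symm
    · intro a _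
      simp
    · intro a _ b _ hab
      exact Finset.singleton_injective hab
    · intro s hs
      obtain ⟨i, rfl⟩ := Finset.card_eq_one.mp (Finset.mem_filter.mp hs).2.symm
      exact ⟨i, Finset.mem_univ i, rfl⟩
    · intro i _
      congr 2
      ext j
      by_cases hj : j = i <;> simp [Finset.piecewise, hj, Function.update]
  rw [← key, ← key, hPuv]

theorem insF_homog' {m' r : ℕ} (u : MultilinearMap K (fun _ : Fin (m' + 1) => X) F)
    (w : MultilinearMap K (fun _ : Fin r => X) X) :
    ∃ U : MultilinearMap K (fun _ : Fin (r + m') => X) F,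
      ∀ x, (∑ i : Fin (m' + 1), u (Function.update (fun _ => x) i (w fun _ => x)))
        = U (fun _ => x) := by
  refine ⟨∑ i : Fin (m' + 1),
    ((((u.domDomCongr (Equiv.swap i 0)).curryLeft.compMultilinearMap w).uncurrySum).domDomCongr
      finSumFinEquiv), fun x => ?_⟩
  rw [MultilinearMap.sum_apply]
  refine Finset.sum_congr rfl fun i _ => ?_
  simp only [MultilinearMap.domDomCongr_apply, MultilinearMap.uncurrySum_apply,
    LinearMap.compMultilinearMap_apply, MultilinearMap.curryLeft_apply, Function.comp]
  congr 1
  funext j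
  rcases eq_or_ne j i with rfl | hj
  · rw [Function.update_self, Equiv.swap_apply_left, Fin.cons_zero]
  · have h0 : Equiv.swap i 0 j ≠ 0 := fun h =>
      hj ((Equiv.swap i 0).injective (by rw [h, Equiv.swap_apply_left]))
    obtain ⟨k, hk⟩ := Fin.exists_succ_eq.mpr h0
    rw [Function.update_of_ne hj, ← hk, Fin.cons_succ]

end DerivAux

/-- `ξ f` does not depend on the multilinear map determining `f`, and it is
a homogeneous polynomial of degree `r + m - 1` (it is `0` when `r + m - 1 < 0`). -/
theorem stmt2 (K : Type*) [Field K] [CharZero K] {X F : Type*} [AddCommGroup X] [Module K X]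
    [AddCommGroup F] [Module K F] (r m : ℕ)
    (ξ : X → X) (hξ : IsHomog K r ξ) (f : X → F)
    (u v : MultilinearMap K (fun _ : Fin m => X) F)
    (hu : ∀ x, f x = u fun _ => x) (hv : ∀ x, f x = v fun _ => x) :
    (∀ x, insF u ξ x = insF v ξ x) ∧
    IsHomog K (r + m - 1) (fun x => insF u ξ x) ∧
    (r + m = 0 → ∀ x, insF u ξ x = 0) := by
  obtain ⟨w, hw⟩ := hξ
  have hdiag : ∀ z, u (fun _ => z) = v (fun _ => z) := fun z => (hu z).symm.trans (hv z)
  refine ⟨fun x => insF_indep' u v hdiag x (ξ x), ?_, ?_⟩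
  · cases m with
    | zero => exact ⟨0, fun x => by rw [MultilinearMap.zero_apply]; simp [insF]⟩
    | succ m' =>
      obtain ⟨U, hU⟩ := insF_homog' u w
      refine ⟨U, fun x => ?_⟩
      have : insF u ξ x = ∑ i : Fin (m' + 1), u (Function.update (fun _ => x) i (w fun _ => x)) := by
        simp only [insF, hw]
      show insF u ξ x = U fun _ => x
      rw [this, hU]
  · intro h x
    have hm : m = 0 := by omega
    subst hm
    simp [insF]
end

section
/- Let K have characteristic zero and let 0 → A → C →p→ B → 0 be an exact sequence of Lie algebras with linear section s : B → C of p (p ∘ s = id_B). For c ∈ C, y ∈ B, set z = s(y) and h_{c,m}(y) = (1/m!)(ad z)^m(c) − Σ_{n+r=m} (t_r/(n+1)!) (ad z)^n (s∘p)((ad z)^r(c)). Then h_{c,m}(y) ∈ A = ker p for all c, y, m. -/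
open Finset
open scoped Nat

lemma genfun_key {K : Type*} [Field K] [CharZero K] (t : ℕ → K) (ht : GenFun K t) (m : ℕ) :
    ∑ nr ∈ Finset.HasAntidiagonal.antidiagonal m, t nr.2 / ((nr.1 + 1)! : K) = 1 / (m ! : K) := by
  have hE : (PowerSeries.exp K - 1)
      = PowerSeries.X * PowerSeries.mk (fun n => (1 / ((n+1)! : K))) := by
    ext k
    cases k with
    | zero => simp [PowerSeries.coeff_exp]
    | succ n =>
      simp [PowerSeries.coeff_exp, PowerSeries.coeff_succ_X_mul, PowerSeries.coeff_mk]
  have h2 : PowerSeries.X * (PowerSeries.mk t * PowerSeries.mk (fun n => (1 / ((n+1)! : K))))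
      = PowerSeries.X * PowerSeries.exp K := by
    rw [← ht, hE]; ring
  have h3 := congrArg (PowerSeries.coeff (m+1)) h2
  rw [PowerSeries.coeff_succ_X_mul, PowerSeries.coeff_succ_X_mul, PowerSeries.coeff_mul,
    PowerSeries.coeff_exp] at h3
  simp only [PowerSeries.coeff_mk] at h3
  rw [← Finset.Nat.sum_antidiagonal_swap]
  simpa [div_eq_mul_inv, Prod.swap] using h3

/-- given an extension `0 → A → C →p→ B → 0` with linear section `s`,
for `c ∈ C`, `y ∈ B`, `z = s(y)`, the element
`h_{c,m}(y) = (1/m!)(ad z)^m(c) - Σ_{n+r=m} (t_r/(n+1)!)(ad z)^n (s∘p)((ad z)^r(c))`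
belongs to `A = ker p`. -/
theorem stmt12 (K : Type*) [Field K] [CharZero K] (B C : Type*)
    [LieRing B] [LieAlgebra K B] [LieRing C] [LieAlgebra K C]
    (t : ℕ → K) (ht : GenFun K t)
    (p : C →ₗ⁅K⁆ B) (hsurj : Function.Surjective p)
    (s : B →ₗ[K] C) (hs : ∀ y, p (s y) = y)
    (c : C) (y : B) (m : ℕ) :
    p ((1 / (m ! : K)) • ((LieAlgebra.ad K C (s y) ^ m) c)
      - ∑ nr ∈ Finset.HasAntidiagonal.antidiagonal m, (t nr.2 / ((nr.1 + 1)! : K)) •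
          ((LieAlgebra.ad K C (s y) ^ nr.1) (s (p ((LieAlgebra.ad K C (s y) ^ nr.2) c))))) = 0 := by
  have hcomm : ∀ (k : ℕ) (x : C),
      p ((LieAlgebra.ad K C (s y) ^ k) x) = (LieAlgebra.ad K B y ^ k) (p x) := by
    intro k
    induction k with
    | zero => intro x; simp
    | succ n ih =>
      intro x
      rw [pow_succ, pow_succ]
      simp only [Module.End.mul_apply]
      rw [ih]
      simp only [LieAlgebra.ad_apply]
      rw [← hs y, ← p.map_lie]
      simp [hs]
  rw [← LieHom.coe_toLinearMap, map_sub, map_smul, map_sum]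
  simp only [LieHom.coe_toLinearMap]
  rw [hcomm]
  have hterm : ∀ nr ∈ Finset.HasAntidiagonal.antidiagonal m,
      p ((t nr.2 / ((nr.1 + 1)! : K)) •
        ((LieAlgebra.ad K C (s y) ^ nr.1) (s (p ((LieAlgebra.ad K C (s y) ^ nr.2) c)))))
      = (t nr.2 / ((nr.1 + 1)! : K)) • (LieAlgebra.ad K B y ^ m) (p c) := by
    intro nr hnr
    rw [Finset.HasAntidiagonal.mem_antidiagonal] at hnr
    rw [← LieHom.coe_toLinearMap, map_smul, LieHom.coe_toLinearMap, hcomm, hs, hcomm,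
      ← Module.End.mul_apply, ← pow_add, hnr]
  rw [Finset.sum_congr rfl hterm, ← Finset.sum_smul, genfun_key t ht m, sub_self]
end
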